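/- arXiv:2207.02948 — 7 statements merged into one kernel-verified Lean document; each statement's English description precedes it below -/
import Mathlib

section
/- Assume 𝔽 is composition-consistent. Let S_T be a nonnegative random variable, and suppose there exists ℙ′ ∈ 𝒫 such that F_{S_T}^{ℙ′} ⪯_𝔽 F_{S_T}^{ℙ} for all ℙ ∈ 𝒫, and such that the likelihood ratio ℓ^{ℙ′} = dℙ′/dℚ satisfies ℓ^{ℙ′} = f(S_T) for some f ∈ 𝔽. Then ℙ′ is a least favorable measure with respect to 𝔽, i.e., F_{ℓ^{ℙ′}}^{ℙ′} ⪯_𝔽 F_{ℓ^{ℙ′}}^{ℙ} for all ℙ ∈ 𝒫. If, additionally, S_T is continuously distributed under ℙ′ (its CDF under ℙ′ is continuous) and f is strictly increasing, then ℓ^{ℙ′} is continuously distributed under ℙ′. -/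
open MeasureTheory Set Real

noncomputable section

/-- CDF of a distribution (measure) on `ℝ`. -/
def mcdf (μ : Measure ℝ) : ℝ → ℝ := fun x => (μ (Iic x)).toReal

/-- CDF of the random variable `X` under `P`. -/
def rvCdf {Ω : Type*} [MeasurableSpace Ω] (P : Measure Ω) (X : Ω → ℝ) : ℝ → ℝ :=
  mcdf (P.map X)

/-- Integral stochastic ordering w.r.t. a class `𝔽`, between distributions on `ℝ`. -/
def IntOrder (𝔽 : Set (ℝ → ℝ)) (μ ν : Measure ℝ) : Prop :=
  ∀ f ∈ 𝔽, Integrable f μ → Integrable f ν → ∫ x, f x ∂μ ≤ ∫ x, f x ∂ν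

/-!
The law of `f ∘ S` under `P` is the image under `f` of the law of `S`, so integrating `g ∈ 𝔽`
against it amounts to integrating `g ∘ f ∈ 𝔽` against the law of `S`; this transfers the order.
A CDF is continuous exactly when its law has no atoms, and a strictly increasing `f` has at most
one preimage in `[0, ∞)`, so every atom of `f ∘ S` would be an atom of `S`.
-/

theorem StieltjesFunction.continuousAt_iff_measure_singleton_eq_zero
    (F : StieltjesFunction ℝ) (x : ℝ) : ContinuousAt F x ↔ F.measure {x} = 0 := by
  rw [F.measure_singleton, ENNReal.ofReal_eq_zero, sub_nonpos,
    F.mono.continuousAt_iff_leftLim_eq_rightLim, F.rightLim_eq]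
  exact ⟨fun h => h.ge, fun h => le_antisymm (F.mono.leftLim_le le_rfl) h⟩

theorem mcdf_eq_cdf (μ : Measure ℝ) [IsProbabilityMeasure μ] :
    mcdf μ = ProbabilityTheory.cdf μ := by
  funext x
  rw [mcdf, ProbabilityTheory.cdf_eq_real, measureReal_def]

theorem continuous_mcdf_iff_nullSingletonClass (μ : Measure ℝ) [IsProbabilityMeasure μ] :
    Continuous (mcdf μ) ↔ NullSingletonClass μ := by
  rw [mcdf_eq_cdf, continuous_iff_continuousAt]
  simp only [StieltjesFunction.continuousAt_iff_measure_singleton_eq_zero,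
    ProbabilityTheory.measure_cdf]
  exact ⟨fun h => ⟨h⟩, fun h => h.measure_singleton⟩

theorem IntOrder.map {𝔽 : Set (ℝ → ℝ)} {μ ν : Measure ℝ} (h : IntOrder 𝔽 μ ν)
    (h𝔽meas : ∀ g ∈ 𝔽, Measurable g) {f : ℝ → ℝ} (hf : Measurable f)
    (hcomp : ∀ g ∈ 𝔽, g ∘ f ∈ 𝔽) : IntOrder 𝔽 (μ.map f) (ν.map f) := by
  intro g hg hμ hν
  have hg' : Measurable g := h𝔽meas g hg
  rw [integral_map hf.aemeasurable hg'.aestronglyMeasurable,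
    integral_map hf.aemeasurable hg'.aestronglyMeasurable]
  exact h (g ∘ f) (hcomp g hg)
    ((integrable_map_measure hg'.aestronglyMeasurable hf.aemeasurable).1 hμ)
    ((integrable_map_measure hg'.aestronglyMeasurable hf.aemeasurable).1 hν)

theorem MeasureTheory.Measure.nullSingletonClass_map_comp_of_injOn {Ω α β : Type*} [MeasurableSpace Ω]
    [MeasurableSpace α] [MeasurableSpace β] [MeasurableSingletonClass β]
    (P : Measure Ω) {X : Ω → α} {g : α → β} (hX : Measurable X) (hg : Measurable g)
    (hinj : InjOn g (range X)) [NullSingletonClass (P.map X)] :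
    NullSingletonClass (P.map (g ∘ X)) := by
  refine ⟨fun y => le_antisymm ?_ zero_le⟩
  have hfiber : (g ⁻¹' {y} ∩ range X).Subsingleton :=
    fun a ha b hb => hinj ha.2 hb.2 (ha.1.trans hb.1.symm)
  calc P.map (g ∘ X) {y} = P (X ⁻¹' (g ⁻¹' {y} ∩ range X)) := by
        rw [Measure.map_apply (hg.comp hX) (measurableSet_singleton y), preimage_comp,
          preimage_inter_range]
    _ ≤ P.map X (g ⁻¹' {y} ∩ range X) := Measure.le_map_apply hX.aemeasurable _
    _ = 0 := hfiber.measure_zero _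

theorem stmt1_general {Ω : Type*} [MeasurableSpace Ω]
    (Ps : Set (Measure Ω))
    (hPsprob : ∀ P ∈ Ps, IsProbabilityMeasure P)
    (𝔽 : Set (ℝ → ℝ))
    (h𝔽meas : ∀ f ∈ 𝔽, Measurable f)
    (h𝔽comp : ∀ f ∈ 𝔽, ∀ g ∈ 𝔽, f ∘ g ∈ 𝔽)
    (S : Ω → ℝ) (hS : Measurable S) (hSpos : ∀ ω, 0 ≤ S ω)
    (P' : Measure Ω) (hP' : P' ∈ Ps)
    (hdom : ∀ P ∈ Ps, IntOrder 𝔽 (P'.map S) (P.map S))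
    (f : ℝ → ℝ) (hf : f ∈ 𝔽) :
    (∀ P ∈ Ps, IntOrder 𝔽 (P'.map (fun ω => f (S ω))) (P.map (fun ω => f (S ω)))) ∧
    (Continuous (rvCdf P' S) → StrictMonoOn f (Ici 0) →
      Continuous (rvCdf P' (fun ω => f (S ω)))) := by
  have hfm : Measurable f := h𝔽meas f hf
  have hmap (P : Measure Ω) : P.map (f ∘ S) = (P.map S).map f := (Measure.map_map hfm hS).symm
  refine ⟨fun P hP => ?_, fun hcont hmono => ?_⟩
  · rw [← Function.comp_def, hmap, hmap]
    exact (hdom P hP).map h𝔽meas hfm fun g hg => h𝔽comp g hg f hf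
  · have := hPsprob P' hP'
    have := Measure.isProbabilityMeasure_map (μ := P') hS.aemeasurable
    have := Measure.isProbabilityMeasure_map (μ := P') (hfm.comp hS).aemeasurable
    change Continuous (mcdf (P'.map S)) at hcont
    change Continuous (mcdf (P'.map (f ∘ S)))
    rw [continuous_mcdf_iff_nullSingletonClass] at hcont ⊢
    exact Measure.nullSingletonClass_map_comp_of_injOn P' hS hfm
      (hmono.injOn.mono (range_subset_iff.2 hSpos))

/-- sufficient conditions for a least favorable measure:
`𝔽` composition-consistent, `Ps` a family of probability measures equivalent to the
pricing measure `Q`, `P' ∈ Ps` with `F_{S_T}^{P'} ⪯_𝔽 F_{S_T}^{P}` for all `P ∈ Ps` and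
likelihood ratio `dP'/dQ = f(S_T)` for some `f ∈ 𝔽` (expressed by
`P' = Q.withDensity (ofReal (f ∘ S))`).  Then `P'` is least favorable w.r.t. `𝔽`, i.e.
`F_{ℓ'}^{P'} ⪯_𝔽 F_{ℓ'}^{P}` for all `P ∈ Ps`, where `ℓ' = f ∘ S`; and if moreover the CDF
of `S_T` under `P'` is continuous and `f` is strictly increasing on `ℝ₊`, then `ℓ'` is
continuously distributed under `P'`. -/
theorem stmt1 {Ω : Type*} [MeasurableSpace Ω]
    (Q : Measure Ω) [IsProbabilityMeasure Q]
    (Ps : Set (Measure Ω))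
    (hPsprob : ∀ P ∈ Ps, IsProbabilityMeasure P)
    (hPsequiv : ∀ P ∈ Ps, P ≪ Q ∧ Q ≪ P)
    (𝔽 : Set (ℝ → ℝ))
    (h𝔽meas : ∀ f ∈ 𝔽, Measurable f)
    (h𝔽comp : ∀ f ∈ 𝔽, ∀ g ∈ 𝔽, f ∘ g ∈ 𝔽)
    (S : Ω → ℝ) (hS : Measurable S) (hSpos : ∀ ω, 0 ≤ S ω)
    (P' : Measure Ω) (hP' : P' ∈ Ps)
    (hdom : ∀ P ∈ Ps, IntOrder 𝔽 (P'.map S) (P.map S))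
    (f : ℝ → ℝ) (hf : f ∈ 𝔽)
    (hlr : P' = Q.withDensity (fun ω => ENNReal.ofReal (f (S ω)))) :
    (∀ P ∈ Ps, IntOrder 𝔽 (P'.map (fun ω => f (S ω))) (P.map (fun ω => f (S ω)))) ∧
    (Continuous (rvCdf P' S) → StrictMonoOn f (Ici 0) →
      Continuous (rvCdf P' (fun ω => f (S ω)))) :=
  stmt1_general Ps hPsprob 𝔽 h𝔽meas h𝔽comp S hS hSpos P' hP' hdom f hf
end
end

section
/- Let F be the cumulative distribution function of a log-normal distribution with parameters M ∈ ℝ and V > 0 (i.e., the distribution of e^Z where Z is normal with mean M and variance V). Then for every q ∈ (0,1), ∫₀^q F^{-1}(p) dp = e^{M + V/2} · Φ(Φ^{-1}(q) − √V), where Φ is the standard normal cumulative distribution function and F^{-1} is the quantile function of F. -/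
/-!
For `p ∈ (0, 1)` the log-normal quantile is `F⁻¹(p) = exp (M + √V Φ⁻¹(p))`. The function
`G(p) = e^{M + V/2} Φ(Φ⁻¹(p) - √V)` has derivative `e^{M + V/2} φ(Φ⁻¹(p) - √V) / φ(Φ⁻¹(p))`,
which is `F⁻¹(p)` by completing the square in the Gaussian density `φ`. As `p → 0⁺`,
`Φ⁻¹(p) → -∞` and hence `G(p) → 0`, so the fundamental theorem of calculus on `[0, q]` gives
`∫₀^q F⁻¹ = G(q)`.
-/

open MeasureTheory Set Real ProbabilityTheory

noncomputable section

/-- Left-continuous quantile function of a distribution function `F`. -/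
def quantile (F : ℝ → ℝ) (p : ℝ) : ℝ := sInf {x : ℝ | p ≤ F x}

/-- The log-normal distribution with parameters `m` (log-mean) and `v` (log-variance):
the law of `exp Z` with `Z` normal of mean `m` and variance `v`. -/
def lognormal (m v : ℝ) : Measure ℝ :=
  (gaussianReal m v.toNNReal).map Real.exp

/-- The standard normal CDF `Φ`. -/
def stdNormalCdf : ℝ → ℝ := mcdf (gaussianReal 0 1)

/-- The quantile function `Φ⁻¹` of the standard normal distribution. -/
def stdNormalQuantile : ℝ → ℝ := quantile stdNormalCdf

open Filter Topology
open scoped NNReal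

local notation "Φ" => stdNormalCdf
local notation "φ" => gaussianPDFReal 0 1

lemma quantile_eq_of_forall_le_iff {F : ℝ → ℝ} {p x₀ : ℝ} (h : ∀ x, p ≤ F x ↔ x₀ ≤ x) :
    quantile F p = x₀ := by
  rw [quantile, show {x | p ≤ F x} = Ici x₀ from Set.ext h, csInf_Ici]

lemma continuous_gaussianPDFReal (m : ℝ) (v : ℝ≥0) : Continuous (gaussianPDFReal m v) := by
  rw [gaussianPDFReal_def]
  fun_prop

lemma exp_mul_gaussianPDFReal (s t : ℝ) : exp (s * t) * φ t = exp (s ^ 2 / 2) * φ (t - s) := by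
  simp only [gaussianPDFReal, NNReal.coe_one, mul_one, sub_zero]
  rw [mul_left_comm, ← exp_add, mul_left_comm, ← exp_add]
  ring_nf

lemma stdNormalCdf_eq_cdf : Φ = cdf (gaussianReal 0 1) := by
  ext x
  rw [stdNormalCdf, mcdf, cdf_eq_real, measureReal_def]

lemma stdNormalCdf_eq_integral (x : ℝ) : Φ x = ∫ t in Iic x, φ t := by
  rw [stdNormalCdf, mcdf, gaussianReal_apply_eq_integral 0 one_ne_zero,
    ENNReal.toReal_ofReal (integral_nonneg fun t => gaussianPDFReal_nonneg _ _ _)]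

lemma hasDerivAt_stdNormalCdf (x : ℝ) : HasDerivAt Φ (φ x) x := by
  have hφ : Integrable φ := integrable_gaussianPDFReal 0 1
  have hΦ : Φ = fun y => Φ 0 + ∫ t in 0..y, φ t := by
    ext y
    rw [stdNormalCdf_eq_integral, stdNormalCdf_eq_integral,
      ← intervalIntegral.integral_Iic_sub_Iic hφ.integrableOn hφ.integrableOn, add_sub_cancel]
  rw [hΦ]
  exact ((continuous_gaussianPDFReal 0 1).integral_hasStrictDerivAt 0 x).hasDerivAt.const_add _

lemma strictMono_stdNormalCdf : StrictMono Φ :=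
  strictMono_of_deriv_pos fun x =>
    (hasDerivAt_stdNormalCdf x).deriv ▸ gaussianPDFReal_pos _ _ _ one_ne_zero

lemma continuous_stdNormalCdf : Continuous Φ :=
  continuous_iff_continuousAt.2 fun x => (hasDerivAt_stdNormalCdf x).continuousAt

lemma tendsto_stdNormalCdf_atBot : Tendsto Φ atBot (𝓝 0) :=
  stdNormalCdf_eq_cdf ▸ tendsto_cdf_atBot _

lemma tendsto_stdNormalCdf_atTop : Tendsto Φ atTop (𝓝 1) :=
  stdNormalCdf_eq_cdf ▸ tendsto_cdf_atTop _

lemma stdNormalCdf_mem_Ioo (x : ℝ) : Φ x ∈ Ioo 0 1 :=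
  ⟨(stdNormalCdf_eq_cdf ▸ cdf_nonneg _ (x - 1)).trans_lt (strictMono_stdNormalCdf (by linarith)),
    (strictMono_stdNormalCdf (by linarith)).trans_le (stdNormalCdf_eq_cdf ▸ cdf_le_one _ (x + 1))⟩

lemma range_stdNormalCdf : range Φ = Ioo 0 1 := by
  refine (range_subset_iff.2 stdNormalCdf_mem_Ioo).antisymm fun p hp => ?_
  obtain ⟨a, ha⟩ := (tendsto_stdNormalCdf_atBot.eventually_lt_const hp.1).exists
  obtain ⟨b, hb⟩ := (tendsto_stdNormalCdf_atTop.eventually_const_lt hp.2).exists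
  exact mem_range_of_exists_le_of_exists_ge continuous_stdNormalCdf ⟨a, ha.le⟩ ⟨b, hb.le⟩

lemma stdNormalQuantile_stdNormalCdf (x : ℝ) : stdNormalQuantile (Φ x) = x :=
  quantile_eq_of_forall_le_iff fun _ => strictMono_stdNormalCdf.le_iff_le

lemma stdNormalCdf_stdNormalQuantile {p : ℝ} (hp : p ∈ Ioo 0 1) : Φ (stdNormalQuantile p) = p := by
  obtain ⟨x, rfl⟩ : p ∈ range Φ := range_stdNormalCdf ▸ hp
  rw [stdNormalQuantile_stdNormalCdf]

lemma stdNormalQuantile_le_iff {p : ℝ} (hp : p ∈ Ioo 0 1) (x : ℝ) :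
    stdNormalQuantile p ≤ x ↔ p ≤ Φ x := by
  rw [← strictMono_stdNormalCdf.le_iff_le, stdNormalCdf_stdNormalQuantile hp]

lemma monotoneOn_stdNormalQuantile : MonotoneOn stdNormalQuantile (Ioo 0 1) :=
  fun _ hp _ hq hpq =>
    (stdNormalQuantile_le_iff hp _).2 (hpq.trans_eq (stdNormalCdf_stdNormalQuantile hq).symm)

lemma continuousAt_stdNormalQuantile {p : ℝ} (hp : p ∈ Ioo 0 1) :
    ContinuousAt stdNormalQuantile p := by
  refine continuousAt_of_monotoneOn_of_image_mem_nhds monotoneOn_stdNormalQuantile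
    (isOpen_Ioo.mem_nhds hp) ?_
  rw [← range_stdNormalCdf, ← range_comp, Function.comp_def]
  simp only [stdNormalQuantile_stdNormalCdf, range_id', univ_mem]

lemma hasDerivAt_stdNormalQuantile {p : ℝ} (hp : p ∈ Ioo 0 1) :
    HasDerivAt stdNormalQuantile (φ (stdNormalQuantile p))⁻¹ p :=
  (hasDerivAt_stdNormalCdf _).of_local_left_inverse (continuousAt_stdNormalQuantile hp)
    (gaussianPDFReal_pos _ _ _ one_ne_zero).ne'
    (eventually_of_mem (isOpen_Ioo.mem_nhds hp) fun _ => stdNormalCdf_stdNormalQuantile)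

lemma tendsto_stdNormalQuantile_nhdsGT_zero : Tendsto stdNormalQuantile (𝓝[>] 0) atBot := by
  refine tendsto_atBot.2 fun x => ?_
  filter_upwards [Ioo_mem_nhdsGT (stdNormalCdf_mem_Ioo x).1] with p hp
  exact (stdNormalQuantile_le_iff ⟨hp.1, hp.2.trans (stdNormalCdf_mem_Ioo x).2⟩ x).2 hp.2.le

lemma gaussianReal_eq_map_stdGaussian (m : ℝ) (v : ℝ≥0) :
    gaussianReal m v = (gaussianReal 0 1).map (fun t => √v * t + m) := by
  have hscale : (gaussianReal 0 1).map (√v * ·) = gaussianReal 0 v := by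
    rw [gaussianReal_map_const_mul, mul_zero]
    congr
    ext
    simp
  rw [← Function.comp_def (· + m) (√v * ·),
    ← Measure.map_map (measurable_add_const m) (measurable_const_mul _), hscale,
    gaussianReal_map_add_const, zero_add]

lemma mcdf_gaussianReal (m : ℝ) {v : ℝ≥0} (hv : v ≠ 0) (x : ℝ) :
    mcdf (gaussianReal m v) x = Φ ((x - m) / √v) := by
  have hs : 0 < √(v : ℝ) := sqrt_pos.2 (NNReal.coe_pos.2 (pos_iff_ne_zero.2 hv))
  have hpre : (fun t => √v * t + m) ⁻¹' Iic x = Iic ((x - m) / √v) := by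
    ext t
    simp only [mem_preimage, mem_Iic, le_div_iff₀ hs]
    constructor <;> intro h <;> linarith
  rw [gaussianReal_eq_map_stdGaussian, mcdf, Measure.map_apply (by fun_prop) measurableSet_Iic,
    hpre]
  rfl

lemma mcdf_lognormal_of_nonpos (M V : ℝ) {y : ℝ} (hy : y ≤ 0) : mcdf (lognormal M V) y = 0 := by
  have hpre : exp ⁻¹' Iic y = ∅ :=
    eq_empty_of_forall_notMem fun t ht => (exp_pos t).not_ge (le_trans ht hy)
  rw [mcdf, lognormal, Measure.map_apply measurable_exp measurableSet_Iic, hpre, measure_empty,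
    ENNReal.toReal_zero]

lemma mcdf_lognormal_of_pos (M : ℝ) {V y : ℝ} (hV : 0 < V) (hy : 0 < y) :
    mcdf (lognormal M V) y = Φ ((log y - M) / √V) := by
  have hpre : exp ⁻¹' Iic y = Iic (log y) := by
    ext t
    exact (le_log_iff_exp_le hy).symm
  rw [mcdf, lognormal, Measure.map_apply measurable_exp measurableSet_Iic, hpre]
  change mcdf (gaussianReal M V.toNNReal) (log y) = _
  rw [mcdf_gaussianReal M (toNNReal_pos.2 hV).ne', coe_toNNReal V hV.le]

lemma quantile_mcdf_lognormal (M : ℝ) {V p : ℝ} (hV : 0 < V) (hp : p ∈ Ioo 0 1) :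
    quantile (mcdf (lognormal M V)) p = exp (M + √V * stdNormalQuantile p) := by
  refine quantile_eq_of_forall_le_iff fun y => ?_
  rcases le_or_gt y 0 with hy | hy
  · rw [mcdf_lognormal_of_nonpos M V hy]
    exact iff_of_false hp.1.not_ge ((exp_pos _).trans_le' hy |>.not_ge)
  · rw [mcdf_lognormal_of_pos M hV hy, ← stdNormalQuantile_le_iff hp,
      le_div_iff₀ (sqrt_pos.2 hV), ← le_log_iff_exp_le hy]
    constructor <;> intro h <;> linarith

lemma hasDerivAt_exp_mul_stdNormalCdf_sub (M s : ℝ) {p : ℝ} (hp : p ∈ Ioo 0 1) :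
    HasDerivAt (fun p => exp (M + s ^ 2 / 2) * Φ (stdNormalQuantile p - s))
      (exp (M + s * stdNormalQuantile p)) p := by
  have h := ((hasDerivAt_stdNormalCdf _).comp p
    ((hasDerivAt_stdNormalQuantile hp).sub_const s)).const_mul (exp (M + s ^ 2 / 2))
  refine h.congr_deriv ?_
  have hφ := (gaussianPDFReal_pos 0 1 (stdNormalQuantile p) one_ne_zero).ne'
  have hsquare := exp_mul_gaussianPDFReal s (stdNormalQuantile p)
  rw [exp_add, exp_add]
  field_simp
  linear_combination -hsquare

lemma intervalIntegrable_exp_mul_stdNormalQuantile (M : ℝ) {s q : ℝ} (hs : 0 ≤ s)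
    (hq : q ∈ Ioo 0 1) :
    IntervalIntegrable (fun p => exp (M + s * stdNormalQuantile p)) volume 0 q := by
  have hIoc : Ioc 0 q ⊆ Ioo 0 1 := Ioc_subset_Ioo_right hq.2
  rw [intervalIntegrable_iff_integrableOn_Ioc_of_le hq.1.le]
  refine .of_bound measure_Ioc_lt_top ?_ (exp (M + s * stdNormalQuantile q)) ?_
  · refine ContinuousOn.aestronglyMeasurable (fun p hp => ?_) measurableSet_Ioc
    exact (((continuousAt_stdNormalQuantile (hIoc hp)).const_mul s).const_add M).rexp
      |>.continuousWithinAt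
  · filter_upwards [ae_restrict_mem measurableSet_Ioc] with p hp
    rw [norm_of_nonneg (exp_pos _).le, exp_le_exp]
    gcongr
    exact monotoneOn_stdNormalQuantile (hIoc hp) hq hp.2

/-- for the CDF `F` of a log-normal distribution with parameters `M ∈ ℝ` and
`V > 0`, one has `∫₀^q F⁻¹(p) dp = e^{M + V/2} Φ(Φ⁻¹(q) − √V)` for every `q ∈ (0,1)`. -/
theorem stmt7 (M V : ℝ) (hV : 0 < V) :
    ∀ q ∈ Ioo (0:ℝ) 1,
      ∫ p in (0:ℝ)..q, quantile (mcdf (lognormal M V)) p =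
        Real.exp (M + V / 2) * stdNormalCdf (stdNormalQuantile q - Real.sqrt V) := by
  intro q hq
  have hIoc : Ioc 0 q ⊆ Ioo 0 1 := Ioc_subset_Ioo_right hq.2
  have hderiv (p : ℝ) (hp : p ∈ Ioo 0 1) :
      HasDerivAt (fun p => exp (M + V / 2) * Φ (stdNormalQuantile p - √V))
        (exp (M + √V * stdNormalQuantile p)) p := by
    simpa only [sq_sqrt hV.le] using hasDerivAt_exp_mul_stdNormalCdf_sub M (√V) hp
  have hlim_zero : Tendsto (fun p => exp (M + V / 2) * Φ (stdNormalQuantile p - √V))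
      (𝓝[>] 0) (𝓝 0) := by
    simpa [sub_eq_add_neg] using (tendsto_stdNormalCdf_atBot.comp
      (tendsto_atBot_add_const_right _ _ tendsto_stdNormalQuantile_nhdsGT_zero)).const_mul
      (exp (M + V / 2))
  rw [intervalIntegral.integral_congr_ae (ae_of_all _ fun p hp =>
      quantile_mcdf_lognormal M hV (hIoc (uIoc_of_le hq.1.le ▸ hp))),
    intervalIntegral.integral_eq_sub_of_hasDerivAt_of_tendsto hq.1
      (fun p hp => hderiv p (hIoc (Ioo_subset_Ioc_self hp)))
      (intervalIntegrable_exp_mul_stdNormalQuantile M (sqrt_nonneg V) hq) hlim_zero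
      ((hderiv q hq).continuousAt.tendsto.mono_left nhdsWithin_le_nhds),
    sub_zero]
end
end

section
/- Let T > 0, S₀ > 0, μ₁ ≤ μ and 0 < σ ≤ s. Let F₁ be the CDF of the log-normal distribution with parameters log S₀ + (μ₁ − s²/2)T and s²T (log-mean and log-variance), and F₂ the CDF of the log-normal distribution with parameters log S₀ + (μ − σ²/2)T and σ²T. Then F₁ ⪯_{𝔽_SSD} F₂, i.e., ∫ f dF₁ ≤ ∫ f dF₂ for every nondecreasing concave function f: ℝ₊ → ℝ for which both integrals exist and are finite. -/
/-!
Write both laws as images of a standard normal `Z`: `X₁ = exp (M₁ + a₁ Z)` and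
`X₂ = exp (M₂ + a₂ Z)` with `a₁ ≥ a₂ ≥ 0`. If `a₁ > a₂` the two exponents cross exactly once,
so that `X₁ ≤ X₂ ≤ c` on one side of the crossing and `c ≤ X₂ ≤ X₁` on the other, `c` being
the common value there. Subtracting from a concave nondecreasing `f` a supporting line `k x`
at `c` (with `k ≥ 0`) leaves a function increasing up to `c` and decreasing after it, hence
`f X₁ - k X₁ ≤ f X₂ - k X₂` pointwise; integrating and using
`𝔼 X₁ = exp (M₁ + a₁² / 2) ≤ exp (M₂ + a₂² / 2) = 𝔼 X₂` gives `𝔼 f X₁ ≤ 𝔼 f X₂`.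
-/

open MeasureTheory Set Real ProbabilityTheory

noncomputable section

/-- `𝔽_SSD`: all nondecreasing concave functions on `ℝ₊`. -/
def FSSD : Set (ℝ → ℝ) := {f | MonotoneOn f (Ici 0) ∧ ConcaveOn ℝ (Ici 0) f}

theorem ConcaveOn.exists_nonneg_monotoneOn_antitoneOn_sub_mul {S : Set ℝ} {f : ℝ → ℝ} {c : ℝ}
    (hf : ConcaveOn ℝ S f) (hmono : MonotoneOn f S) (hc : c ∈ interior S) :
    ∃ k, 0 ≤ k ∧ MonotoneOn (fun x => f x - k * x) (S ∩ Iic c) ∧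
      AntitoneOn (fun x => f x - k * x) (S ∩ Ici c) := by
  have hcS := interior_subset hc
  set k := -derivWithin (-f) (Iio c) c
  have slope_left (x : ℝ) (hx : x ∈ S) (hxc : x < c) : k ≤ slope f x c := by
    have := hf.neg.slope_le_leftDeriv_of_mem_interior hx hc hxc
    simp only [slope_neg_fun, Pi.neg_apply] at this
    linarith
  have slope_right (y : ℝ) (hy : y ∈ S) (hcy : c < y) : slope f c y ≤ k := by
    have := (hf.neg.leftDeriv_le_rightDeriv_of_mem_interior hc).trans
      (hf.neg.rightDeriv_le_slope_of_mem_interior hc hy hcy)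
    simp only [slope_neg_fun, Pi.neg_apply] at this
    linarith
  obtain ⟨y, hcy, hy⟩ : ∃ y, c < y ∧ y ∈ S :=
    Filter.Eventually.exists_gt (mem_interior_iff_mem_nhds.mp hc)
  refine ⟨k, ?_, ?_, ?_⟩
  · refine le_trans ?_ (slope_right y hy hcy)
    rw [slope_def_field]
    exact div_nonneg (sub_nonneg.2 (hmono hcS hy hcy.le)) (sub_nonneg.2 hcy.le)
  · rintro x ⟨hx, hxc⟩ y ⟨hy, hyc⟩ hxy
    rcases hxy.eq_or_lt with rfl | hxy
    · rfl
    have : k ≤ slope f x y := (slope_left x hx (hxy.trans_le hyc)).trans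
      (hf.antitoneOn_slope_gt hx ⟨hy, hxy⟩ ⟨hcS, hxy.trans_le hyc⟩ hyc)
    rw [slope_def_field, le_div_iff₀ (sub_pos.2 hxy)] at this
    linarith
  · rintro x ⟨hx, hcx⟩ y ⟨hy, hcy⟩ hxy
    rcases hxy.eq_or_lt with rfl | hxy
    · rfl
    have : slope f x y ≤ k := by
      rw [slope_comm]
      exact (hf.antitoneOn_slope_lt hy ⟨hcS, hcx.trans_lt hxy⟩ ⟨hx, hxy⟩ hcx).trans
        (by rw [slope_comm]; exact slope_right y hy (hcx.trans_lt hxy))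
    rw [slope_def_field, div_le_iff₀ (sub_pos.2 hxy)] at this
    linarith

theorem integral_comp_le_integral_comp_of_crossing {Ω : Type*} [MeasurableSpace Ω]
    {ν : Measure Ω} {S : Set ℝ} {f : ℝ → ℝ} {X Y : Ω → ℝ} {c : ℝ}
    (hf : ConcaveOn ℝ S f) (hmono : MonotoneOn f S) (hc : c ∈ interior S)
    (hXS : ∀ ω, X ω ∈ S) (hYS : ∀ ω, Y ω ∈ S)
    (hcross : ∀ ω, X ω ≤ Y ω ∧ Y ω ≤ c ∨ c ≤ Y ω ∧ Y ω ≤ X ω)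
    (hX : Integrable X ν) (hY : Integrable Y ν) (hmean : ∫ ω, X ω ∂ν ≤ ∫ ω, Y ω ∂ν)
    (hfX : Integrable (fun ω => f (X ω)) ν) (hfY : Integrable (fun ω => f (Y ω)) ν) :
    ∫ ω, f (X ω) ∂ν ≤ ∫ ω, f (Y ω) ∂ν := by
  obtain ⟨k, hk, hleft, hright⟩ := hf.exists_nonneg_monotoneOn_antitoneOn_sub_mul hmono hc
  have hpointwise (ω : Ω) : f (X ω) - k * X ω ≤ f (Y ω) - k * Y ω := by
    rcases hcross ω with ⟨hXY, hYc⟩ | ⟨hcY, hYX⟩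
    · exact hleft ⟨hXS ω, hXY.trans hYc⟩ ⟨hYS ω, hYc⟩ hXY
    · exact hright ⟨hYS ω, hcY⟩ ⟨hXS ω, hcY.trans hYX⟩ hYX
  have hsplit {Z : Ω → ℝ} (hZ : Integrable Z ν) (hfZ : Integrable (fun ω => f (Z ω)) ν) :
      ∫ ω, f (Z ω) ∂ν = ∫ ω, (f (Z ω) - k * Z ω) ∂ν + k * ∫ ω, Z ω ∂ν := by
    rw [integral_sub hfZ (hZ.const_mul k), integral_const_mul, sub_add_cancel]
  rw [hsplit hX hfX, hsplit hY hfY]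
  exact add_le_add
    (integral_mono (hfX.sub (hX.const_mul k)) (hfY.sub (hY.const_mul k)) hpointwise)
    (mul_le_mul_of_nonneg_left hmean hk)

theorem integrable_exp_affine_gaussianReal (M a : ℝ) :
    Integrable (fun z => exp (M + a * z)) (gaussianReal 0 1) := by
  simp_rw [exp_add]
  exact (integrable_exp_mul_gaussianReal a).const_mul _

theorem integral_exp_affine_gaussianReal (M a : ℝ) :
    ∫ z, exp (M + a * z) ∂gaussianReal 0 1 = exp (M + a ^ 2 / 2) := by
  simp_rw [exp_add, integral_const_mul]
  have := congrFun (mgf_id_gaussianReal (μ := 0) (v := 1)) a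
  simp only [mgf, id] at this
  rw [this]
  simp

theorem lognormal_eq_map_gaussianReal (M : ℝ) {v : ℝ} (hv : 0 ≤ v) :
    lognormal M v = (gaussianReal 0 1).map (fun z => exp (M + √v * z)) := by
  have hgauss : (gaussianReal 0 1).map (fun z => M + √v * z) = gaussianReal M v.toNNReal := by
    rw [show (fun z => M + √v * z) = (M + ·) ∘ (√v * ·) from rfl,
      ← Measure.map_map (by fun_prop) (by fun_prop), gaussianReal_map_const_mul,
      gaussianReal_map_const_add]
    congr 1
    · simp
    · ext; simp [sq_sqrt hv, hv]
  rw [lognormal, ← hgauss, Measure.map_map measurable_exp (by fun_prop)]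
  rfl

theorem intOrder_FSSD_lognormal {M₁ M₂ v₁ v₂ : ℝ} (hv₂ : 0 ≤ v₂) (hv : v₂ ≤ v₁)
    (hmean : M₁ + v₁ / 2 ≤ M₂ + v₂ / 2) :
    IntOrder FSSD (lognormal M₁ v₁) (lognormal M₂ v₂) := by
  rintro f ⟨hmono, hconc⟩ hf₁ hf₂
  have hv₁ : 0 ≤ v₁ := hv₂.trans hv
  have hmeas (M a : ℝ) : AEMeasurable (fun z => exp (M + a * z)) (gaussianReal 0 1) := by fun_prop
  rw [lognormal_eq_map_gaussianReal M₁ hv₁] at hf₁ ⊢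
  rw [lognormal_eq_map_gaussianReal M₂ hv₂] at hf₂ ⊢
  rw [integral_map (hmeas _ _) hf₁.1, integral_map (hmeas _ _) hf₂.1]
  rw [integrable_map_measure hf₁.1 (hmeas _ _)] at hf₁
  rw [integrable_map_measure hf₂.1 (hmeas _ _)] at hf₂
  rcases hv.eq_or_lt with rfl | hlt
  · refine integral_mono hf₁ hf₂ fun z => hmono (exp_nonneg _) (exp_nonneg _) ?_
    exact exp_le_exp.2 (by linarith)
  set a₁ := √v₁
  set a₂ := √v₂
  have ha₂ : 0 ≤ a₂ := sqrt_nonneg v₂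
  have ha : a₂ < a₁ := sqrt_lt_sqrt hv₂ hlt
  set z₀ := (M₂ - M₁) / (a₁ - a₂)
  have hz₀ : M₁ + a₁ * z₀ = M₂ + a₂ * z₀ := by
    have : a₁ - a₂ ≠ 0 := sub_ne_zero.2 ha.ne'
    simp only [z₀]
    field_simp
    ring
  refine integral_comp_le_integral_comp_of_crossing hconc hmono
    (c := exp (M₁ + a₁ * z₀)) (by simpa using exp_pos _)
    (fun _ => exp_nonneg _) (fun _ => exp_nonneg _) (fun z => ?_)
    (integrable_exp_affine_gaussianReal _ _) (integrable_exp_affine_gaussianReal _ _) ?_ hf₁ hf₂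
  · simp only [exp_le_exp]
    rcases le_total z z₀ with hz | hz
    · have h₁ := mul_le_mul_of_nonneg_left hz ha₂
      have h₂ := mul_le_mul_of_nonneg_left hz (sub_nonneg.2 ha.le)
      exact Or.inl ⟨by linarith, by linarith⟩
    · have h₁ := mul_le_mul_of_nonneg_left hz ha₂
      have h₂ := mul_le_mul_of_nonneg_left hz (sub_nonneg.2 ha.le)
      exact Or.inr ⟨by linarith, by linarith⟩
  · rw [integral_exp_affine_gaussianReal, integral_exp_affine_gaussianReal, sq_sqrt hv₁,
      sq_sqrt hv₂]
    exact exp_le_exp.2 hmean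

theorem stmt8_general (T S₀ μ₁ μ σ s : ℝ)
    (hT : 0 < T) (hμ : μ₁ ≤ μ) (hσ : 0 < σ) (hσs : σ ≤ s) :
    IntOrder FSSD
      (lognormal (Real.log S₀ + (μ₁ - s ^ 2 / 2) * T) (s ^ 2 * T))
      (lognormal (Real.log S₀ + (μ - σ ^ 2 / 2) * T) (σ ^ 2 * T)) := by
  refine intOrder_FSSD_lognormal (by positivity) ?_ ?_
  · exact mul_le_mul_of_nonneg_right (pow_le_pow_left₀ hσ.le hσs 2) hT.le
  · linarith [mul_le_mul_of_nonneg_right hμ hT.le]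

/-- for `T > 0`, `S₀ > 0`, `μ₁ ≤ μ`, `0 < σ ≤ s`, the log-normal distribution
with parameters `log S₀ + (μ₁ − s²/2)T` and `s²T` is dominated in second order stochastic
dominance by the log-normal distribution with parameters `log S₀ + (μ − σ²/2)T` and
`σ²T`. -/
theorem stmt8 (T S₀ μ₁ μ σ s : ℝ)
    (hT : 0 < T) (hS₀ : 0 < S₀) (hμ : μ₁ ≤ μ) (hσ : 0 < σ) (hσs : σ ≤ s) :
    IntOrder FSSD
      (lognormal (Real.log S₀ + (μ₁ - s ^ 2 / 2) * T) (s ^ 2 * T))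
      (lognormal (Real.log S₀ + (μ - σ ^ 2 / 2) * T) (σ ^ 2 * T)) :=
  stmt8_general T S₀ μ₁ μ σ s hT hμ hσ hσs
end
end

section
/- Let 𝔽 be a composition-consistent set of measurable functions ℝ₊ → ℝ. Assume 𝒫 contains a least favorable measure ℙ* with respect to 𝔽, with likelihood ratio ℓ* = dℙ*/dℚ, that F_{ℓ*}^{ℙ*} is continuous and 1/ℓ* has finite variance under ℙ*. Let x₀ > 0 and let (W_ℙ)_{ℙ∈𝒫} be a family of preferences that is 𝔽-family consistent on Y^{x₀} with respect to ℙ*. Suppose the maximization problem max_{X ∈ Y^{x₀}_{W_{ℙ*}}} W_{ℙ*}(X) has a solution X̃ ∈ Y^{x₀} which ℙ*-a.s. equals f(ℓ*) for some f ∈ 𝔽. Then max_{X ∈ Y^{x₀}} inf_{ℙ∈𝒫} W_ℙ(X) = max_{X ∈ Y^{x₀}_{W_{ℙ*}}} W_{ℙ*}(X), and the left-hand maximum is attained by X̃. -/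
/-!
Since `X̃ = f(ℓ*)` `ℙ*`-a.s. (hence `ℙ`-a.s. for every `ℙ ∈ 𝒫`), the law of `X̃` under any
`ℙ` is the push-forward of the law of `ℓ*` by `f`. By composition-consistency, testing the
law of `X̃` against `g ∈ 𝔽` is testing the law of `ℓ*` against `g ∘ f ∈ 𝔽`, so the least
favorable property of `ℙ*` passes to `X̃`. Family consistency then gives
`W_{ℙ*}(X̃) ≤ W_ℙ(X̃)` for all `ℙ`, so `inf_ℙ W_ℙ(X̃) = W_{ℙ*}(X̃)`, while for any `X ∈ Y^{x₀}`,
`inf_ℙ W_ℙ(X) ≤ W_{ℙ*}(X) ≤ W_{ℙ*}(X̃)`.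
-/

open MeasureTheory Set Real

noncomputable section

/-- Real-valued likelihood ratio `dP/dQ`. -/
def lr {Ω : Type*} [MeasurableSpace Ω] (P Q : Measure Ω) : Ω → ℝ :=
  fun ω => (P.rnDeriv Q ω).toReal

/-- A payoff: a nonnegative measurable random variable with finite `Q`-expectation. -/
def IsPayoff {Ω : Type*} [MeasurableSpace Ω] (Q : Measure Ω) (X : Ω → ℝ) : Prop :=
  Measurable X ∧ (∀ ω, 0 ≤ X ω) ∧ Integrable X Q

/-- `𝔽_FSD`: all nondecreasing functions on `ℝ₊`. -/
def FFSD : Set (ℝ → ℝ) := {f | MonotoneOn f (Ici 0)}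

/-- Budget set `Y^{x₀}_{W_P}`: payoffs with finite preference value and price at most
`x₀`. -/
def BudgetSet {Ω : Type*} [MeasurableSpace Ω] (Q : Measure Ω) (r T x₀ : ℝ)
    (W : (Ω → ℝ) → EReal) : Set (Ω → ℝ) :=
  {X | IsPayoff Q X ∧ W X ≠ ⊤ ∧ W X ≠ ⊥ ∧
    Real.exp (-(r * T)) * ∫ ω, X ω ∂Q ≤ x₀}

/-- `Y^{x₀} = ⋂_{P ∈ Ps} Y^{x₀}_{W_P}`. -/
def BudgetSetAll {Ω : Type*} [MeasurableSpace Ω] (Q : Measure Ω) (r T x₀ : ℝ)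
    (Ps : Set (Measure Ω)) (W : Measure Ω → (Ω → ℝ) → EReal) : Set (Ω → ℝ) :=
  {X | ∀ P ∈ Ps, X ∈ BudgetSet Q r T x₀ (W P)}

/-- Composition-consistency of `𝔽`. -/
def CompConsistent (𝔽 : Set (ℝ → ℝ)) : Prop := ∀ f ∈ 𝔽, ∀ g ∈ 𝔽, f ∘ g ∈ 𝔽

-- Members of `𝔽` are only measurable on `ℝ₊`; `f (max x 0)` extends `f` measurably to `ℝ`.
lemma measurable_comp_max_zero {f : ℝ → ℝ} (hf : Measurable fun x : Ici (0 : ℝ) => f x) :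
    Measurable fun x => f (max x 0) :=
  hf.comp ((measurable_id.max measurable_const).subtype_mk (h := fun x => le_max_right x 0))

lemma map_eq_map_map_of_ae_eq_comp {Ω : Type*} [MeasurableSpace Ω] {μ : Measure Ω}
    {X ℓ : Ω → ℝ} {f : ℝ → ℝ} (hℓ : Measurable ℓ) (hℓ_nonneg : ∀ ω, 0 ≤ ℓ ω)
    (hf : Measurable fun x : Ici (0 : ℝ) => f x) (hX : X =ᵐ[μ] fun ω => f (ℓ ω)) :
    μ.map X = (μ.map ℓ).map fun x => f (max x 0) := by
  have hX' : X =ᵐ[μ] (fun x => f (max x 0)) ∘ ℓ :=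
    hX.mono fun ω hω => by simp only [hω, Function.comp_apply, max_eq_left (hℓ_nonneg ω)]
  rw [Measure.map_congr hX', Measure.map_map (measurable_comp_max_zero hf) hℓ]

lemma integrable_comp_and_integral_map_of_ae_nonneg {μ : Measure ℝ} {f g : ℝ → ℝ}
    (hμ : ∀ᵐ x ∂μ, 0 ≤ x) (hf : Measurable fun x => f (max x 0))
    (hg : Integrable g (μ.map fun x => f (max x 0))) :
    Integrable (g ∘ f) μ ∧ ∫ y, g y ∂(μ.map fun x => f (max x 0)) = ∫ x, g (f x) ∂μ := by
  have hclamp : (fun x => g (f (max x 0))) =ᵐ[μ] fun x => g (f x) :=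
    hμ.mono fun x hx => by simp only [max_eq_left hx]
  refine ⟨?_, ?_⟩
  · exact ((integrable_map_measure hg.1 hf.aemeasurable).1 hg).congr hclamp
  · rw [integral_map hf.aemeasurable hg.1]
    exact integral_congr_ae hclamp

lemma IntOrder.map_of_compConsistent {𝔽 : Set (ℝ → ℝ)} {μ ν : Measure ℝ} {f : ℝ → ℝ}
    (hcomp : CompConsistent 𝔽) (hf𝔽 : f ∈ 𝔽) (hf : Measurable fun x => f (max x 0))
    (hμ : ∀ᵐ x ∂μ, 0 ≤ x) (hν : ∀ᵐ x ∂ν, 0 ≤ x) (hμν : IntOrder 𝔽 μ ν) :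
    IntOrder 𝔽 (μ.map fun x => f (max x 0)) (ν.map fun x => f (max x 0)) := by
  intro g hg hgμ hgν
  obtain ⟨hgfμ, hμ_eq⟩ := integrable_comp_and_integral_map_of_ae_nonneg hμ hf hgμ
  obtain ⟨hgfν, hν_eq⟩ := integrable_comp_and_integral_map_of_ae_nonneg hν hf hgν
  rw [hμ_eq, hν_eq]
  exact hμν (g ∘ f) (hcomp g hg f hf𝔽) hgfμ hgfν

theorem stmt12_general {Ω : Type*} [MeasurableSpace Ω]
    (Q : Measure Ω) (r T : ℝ)
    (Ps : Set (Measure Ω))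
    (hPsequiv : ∀ P ∈ Ps, P ≪ Q ∧ Q ≪ P)
    (𝔽 : Set (ℝ → ℝ)) (h𝔽meas : ∀ f ∈ 𝔽, Measurable (fun x : Ici (0:ℝ) => f x))
    (hcomp : CompConsistent 𝔽)
    -- least favorable measure w.r.t. 𝔽
    (Pstar : Measure Ω) (hPstar : Pstar ∈ Ps)
    (hLF : ∀ P ∈ Ps, IntOrder 𝔽 (Pstar.map (lr Pstar Q)) (P.map (lr Pstar Q)))
    (x₀ : ℝ)
    (W : Measure Ω → (Ω → ℝ) → EReal)
    -- 𝔽-family consistency on Y^{x₀} w.r.t. ℙ*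
    (hfc : ∀ X ∈ BudgetSetAll Q r T x₀ Ps W,
      (∀ P ∈ Ps, IntOrder 𝔽 (Pstar.map X) (P.map X)) →
      ∀ P ∈ Ps, W Pstar X ≤ W P X)
    -- a solution X̃ ∈ Y^{x₀} of the maximization problem under ℙ*, with X̃ = f(ℓ*) ℙ*-a.s.
    (Xt : Ω → ℝ)
    (hXtmax : ∀ X ∈ BudgetSet Q r T x₀ (W Pstar), W Pstar X ≤ W Pstar Xt)
    (hXtall : Xt ∈ BudgetSetAll Q r T x₀ Ps W)
    (f : ℝ → ℝ) (hf : f ∈ 𝔽)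
    (hXtf : Xt =ᵐ[Pstar] fun ω => f (lr Pstar Q ω)) :
    (⨅ P ∈ Ps, W P Xt) = W Pstar Xt ∧
    (∀ X ∈ BudgetSetAll Q r T x₀ Ps W, (⨅ P ∈ Ps, W P X) ≤ W Pstar Xt) := by
  have hℓ : Measurable (lr Pstar Q) := (Measure.measurable_rnDeriv Pstar Q).ennreal_toReal
  have hℓ_nonneg : ∀ ω, 0 ≤ lr Pstar Q ω := fun _ => ENNReal.toReal_nonneg
  have hℓ_ae_nonneg (P : Measure Ω) : ∀ᵐ x ∂(P.map (lr Pstar Q)), 0 ≤ x :=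
    (ae_map_iff hℓ.aemeasurable measurableSet_Ici).2 (.of_forall hℓ_nonneg)
  have hXt_LF : ∀ P ∈ Ps, IntOrder 𝔽 (Pstar.map Xt) (P.map Xt) := by
    intro P hP
    have hPPstar : P ≪ Pstar := (hPsequiv P hP).1.trans (hPsequiv Pstar hPstar).2
    rw [map_eq_map_map_of_ae_eq_comp hℓ hℓ_nonneg (h𝔽meas f hf) hXtf,
      map_eq_map_map_of_ae_eq_comp hℓ hℓ_nonneg (h𝔽meas f hf) (hPPstar.ae_le hXtf)]
    exact (hLF P hP).map_of_compConsistent hcomp hf (measurable_comp_max_zero (h𝔽meas f hf))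
      (hℓ_ae_nonneg Pstar) (hℓ_ae_nonneg P)
  have hW_le : ∀ P ∈ Ps, W Pstar Xt ≤ W P Xt := hfc Xt hXtall hXt_LF
  refine ⟨le_antisymm (iInf₂_le Pstar hPstar) (le_iInf₂ hW_le), fun X hX => ?_⟩
  calc (⨅ P ∈ Ps, W P X) ≤ W Pstar X := iInf₂_le Pstar hPstar
    _ ≤ W Pstar Xt := hXtmax X (hX Pstar hPstar)

/-- for a composition-consistent class `𝔽` admitting a least favorable
measure `ℙ*` (with `F_{ℓ*}^{ℙ*}` continuous and `1/ℓ*` of finite variance), and an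
`𝔽`-family-consistent family of preferences, if the single-measure problem under `ℙ*` has
a solution `X̃ ∈ Y^{x₀}` that `ℙ*`-a.s. equals `f(ℓ*)` for some `f ∈ 𝔽`, then
`max_{X ∈ Y^{x₀}} inf_{P ∈ Ps} W_P(X) = max_{X ∈ Y^{x₀}_{W_{ℙ*}}} W_{ℙ*}(X)`, the
left-hand maximum being attained by `X̃` itself. -/
theorem stmt12 {Ω : Type*} [MeasurableSpace Ω]
    (Q : Measure Ω) [IsProbabilityMeasure Q] (r T : ℝ) (hT : 0 < T)
    (Ps : Set (Measure Ω))
    (hPsprob : ∀ P ∈ Ps, IsProbabilityMeasure P)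
    (hPsequiv : ∀ P ∈ Ps, P ≪ Q ∧ Q ≪ P)
    (𝔽 : Set (ℝ → ℝ)) (h𝔽meas : ∀ f ∈ 𝔽, Measurable (fun x : Ici (0:ℝ) => f x))
    (hcomp : CompConsistent 𝔽)
    -- least favorable measure w.r.t. 𝔽
    (Pstar : Measure Ω) (hPstar : Pstar ∈ Ps)
    (hLF : ∀ P ∈ Ps, IntOrder 𝔽 (Pstar.map (lr Pstar Q)) (P.map (lr Pstar Q)))
    (hcont : Continuous (rvCdf Pstar (lr Pstar Q)))
    (hvar : Integrable (fun ω => (1 / lr Pstar Q ω) ^ 2) Pstar)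
    (x₀ : ℝ) (hx₀ : 0 < x₀)
    (W : Measure Ω → (Ω → ℝ) → EReal)
    -- 𝔽-family consistency on Y^{x₀} w.r.t. ℙ*
    (hfc : ∀ X ∈ BudgetSetAll Q r T x₀ Ps W,
      (∀ P ∈ Ps, IntOrder 𝔽 (Pstar.map X) (P.map X)) →
      ∀ P ∈ Ps, W Pstar X ≤ W P X)
    -- a solution X̃ ∈ Y^{x₀} of the maximization problem under ℙ*, with X̃ = f(ℓ*) ℙ*-a.s.
    (Xt : Ω → ℝ)
    (hXt : Xt ∈ BudgetSet Q r T x₀ (W Pstar))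
    (hXtmax : ∀ X ∈ BudgetSet Q r T x₀ (W Pstar), W Pstar X ≤ W Pstar Xt)
    (hXtall : Xt ∈ BudgetSetAll Q r T x₀ Ps W)
    (f : ℝ → ℝ) (hf : f ∈ 𝔽)
    (hXtf : Xt =ᵐ[Pstar] fun ω => f (lr Pstar Q ω)) :
    (⨅ P ∈ Ps, W P Xt) = W Pstar Xt ∧
    (∀ X ∈ BudgetSetAll Q r T x₀ Ps W, (⨅ P ∈ Ps, W P X) ≤ W Pstar Xt) :=
  stmt12_general Q r T Ps hPsequiv 𝔽 h𝔽meas hcomp Pstar hPstar hLF x₀ W hfc Xt hXtmax hXtall f hf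
    hXtf
end
end

section
/- Let u: (0,∞) → ℝ be differentiable, concave and strictly increasing with u′ > 0 strictly decreasing, and let c > 0. Then the function x ↦ (u′)^{-1}(c/x) on (0,∞) is nondecreasing, and it is concave if and only if the function 1/u′ is convex. -/
open Set Real Function

noncomputable section

/-- for a differentiable, concave, strictly increasing utility `u` on
`(0,∞)` whose (positive) marginal utility `u′` is strictly decreasing, and `c > 0`,
the function `x ↦ (u′)⁻¹(c/x)` (defined for those `x > 0` with `c/x` in the range of
`u′`) is nondecreasing, and it is concave if and only if `1/u′` is convex. -/
theorem stmt13 (u u' : ℝ → ℝ)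
    (hderiv : ∀ x ∈ Ioi (0:ℝ), HasDerivAt u (u' x) x)
    (hconc : ConcaveOn ℝ (Ioi 0) u)
    (hmono : StrictMonoOn u (Ioi 0))
    (hpos : ∀ x ∈ Ioi (0:ℝ), 0 < u' x)
    (hanti : StrictAntiOn u' (Ioi 0))
    (c : ℝ) (hc : 0 < c) :
    MonotoneOn (fun x => invFunOn u' (Ioi 0) (c / x))
      {x : ℝ | 0 < x ∧ c / x ∈ u' '' Ioi 0} ∧
    (ConcaveOn ℝ {x : ℝ | 0 < x ∧ c / x ∈ u' '' Ioi 0}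
        (fun x => invFunOn u' (Ioi 0) (c / x)) ↔
      ConvexOn ℝ (Ioi 0) (fun x => 1 / u' x)) := by
  set S : Set ℝ := {x : ℝ | 0 < x ∧ c / x ∈ u' '' Ioi 0} with hSdef
  set f : ℝ → ℝ := fun x => invFunOn u' (Ioi 0) (c / x) with hfdef
  set g : ℝ → ℝ := fun y => c / u' y with hgdef
  -- basic facts
  have hfmem : ∀ x ∈ S, f x ∈ Ioi 0 := by
    intro x hx
    exact Function.invFunOn_mem (by rcases hx.2 with ⟨y, hy, hyx⟩; exact ⟨y, hy, hyx⟩)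
  have hfeq : ∀ x ∈ S, u' (f x) = c / x := by
    intro x hx
    exact Function.invFunOn_eq (by rcases hx.2 with ⟨y, hy, hyx⟩; exact ⟨y, hy, hyx⟩)
  have hgval : ∀ y : ℝ, 0 < u' y → c / g y = u' y := by
    intro y hy
    rw [hgdef]
    field_simp
  have hg_mem : ∀ y ∈ Ioi (0:ℝ), g y ∈ S := by
    intro y hy
    refine ⟨div_pos hc (hpos y hy), ?_⟩
    rw [hgval y (hpos y hy)]
    exact mem_image_of_mem _ hy
  have hfg : ∀ y ∈ Ioi (0:ℝ), f (g y) = y := by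
    intro y hy
    show invFunOn u' (Ioi 0) (c / g y) = y
    rw [hgval y (hpos y hy)]
    exact hanti.injOn.leftInvOn_invFunOn hy
  have hgf : ∀ x ∈ S, g (f x) = x := by
    intro x hx
    show c / u' (f x) = x
    rw [hfeq x hx]; field_simp
  -- convexity of u' image and of S
  have hTconv : Convex ℝ (u' '' Ioi 0) :=
    (convex_Ioi 0).image_hasDerivWithinAt (fun x hx => (hderiv x hx).hasDerivWithinAt)
  have hSconv : Convex ℝ S := by
    rw [convex_iff_ordConnected]
    constructor
    intro x1 h1 x2 h2 x hx
    have hx0 : (0:ℝ) < x := lt_of_lt_of_le h1.1 hx.1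
    refine ⟨hx0, hTconv.ordConnected.out h2.2 h1.2 ⟨?_, ?_⟩⟩
    · exact div_le_div_of_nonneg_left hc.le hx0 hx.2
    · exact div_le_div_of_nonneg_left hc.le h1.1 hx.1
  -- monotonicity of f on S
  have hmonoS : MonotoneOn f S := by
    intro x1 h1 x2 h2 hle
    by_contra hlt
    push_neg at hlt
    have h4 := hanti (hfmem x2 h2) (hfmem x1 h1) hlt
    rw [hfeq x1 h1, hfeq x2 h2] at h4
    have h5 : c / x2 ≤ c / x1 := div_le_div_of_nonneg_left hc.le h1.1 hle
    exact absurd h4 (not_lt.mpr h5)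
  -- monotonicity of g on Ioi 0
  have hgmono : MonotoneOn g (Ioi 0) := by
    intro y1 h1 y2 h2 hle
    rcases eq_or_lt_of_le hle with rfl | hlt
    · exact le_rfl
    · exact le_of_lt (div_lt_div_of_pos_left hc (hpos y2 h2) (hanti h1 h2 hlt))
  refine ⟨hmonoS, ?_, ?_⟩
  · -- concave → convex
    intro hf
    have hgconv : ConvexOn ℝ (Ioi 0) g := by
      refine ⟨convex_Ioi 0, ?_⟩
      intro y1 h1 y2 h2 a b ha hb hab
      have hz : a • y1 + b • y2 ∈ Ioi (0:ℝ) := convex_Ioi 0 h1 h2 ha hb hab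
      have hw : a • g y1 + b • g y2 ∈ S := hSconv (hg_mem y1 h1) (hg_mem y2 h2) ha hb hab
      have h3 : a • y1 + b • y2 ≤ f (a • g y1 + b • g y2) := by
        have h4 := hf.2 (hg_mem y1 h1) (hg_mem y2 h2) ha hb hab
        rwa [hfg y1 h1, hfg y2 h2] at h4
      calc g (a • y1 + b • y2) ≤ g (f (a • g y1 + b • g y2)) :=
            hgmono hz (hfmem _ hw) h3
        _ = a • g y1 + b • g y2 := hgf _ hw
    have h6 := hgconv.smul (le_of_lt (inv_pos.mpr hc))
    have heq : (fun x => (1:ℝ) / u' x) = fun x => c⁻¹ • g x := by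
      funext y
      show 1 / u' y = c⁻¹ * (c / u' y)
      rw [← mul_div_assoc, inv_mul_cancel₀ hc.ne']
    rw [heq]
    exact h6
  · -- convex → concave
    intro hg1
    have hgconv : ConvexOn ℝ (Ioi 0) g := by
      have h6 := hg1.smul hc.le
      have heq : g = fun y => c • (1 / u' y) := by
        funext y
        show c / u' y = c * (1 / u' y)
        rw [mul_one_div]
      rw [heq]
      exact h6
    refine ⟨hSconv, ?_⟩
    intro x1 h1 x2 h2 a b ha hb hab
    have hz : a • f x1 + b • f x2 ∈ Ioi (0:ℝ) :=
      convex_Ioi 0 (hfmem x1 h1) (hfmem x2 h2) ha hb hab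
    have hw : a • x1 + b • x2 ∈ S := hSconv h1 h2 ha hb hab
    have h3 : g (a • f x1 + b • f x2) ≤ a • x1 + b • x2 := by
      have h4 := hgconv.2 (hfmem x1 h1) (hfmem x2 h2) ha hb hab
      rwa [hgf x1 h1, hgf x2 h2] at h4
    calc a • f x1 + b • f x2 = f (g (a • f x1 + b • f x2)) := (hfg _ hz).symm
      _ ≤ f (a • x1 + b • x2) := hmonoS (hg_mem _ hz) hw h3
end
end

section
/- Fix ℙ ∈ 𝒫 with likelihood ratio ℓ^ℙ = dℙ/dℚ, and assume ℓ^ℙ is continuously distributed under ℙ and 1/ℓ^ℙ has finite variance under ℙ. Let W_ℙ be a ℙ-law invariant preference, x₀ > 0, and suppose X̃ is a ℙ-a.s. unique maximizer of W_ℙ over Y^{x₀}_{W_ℙ} (i.e., X̃ ∈ Y^{x₀}_{W_ℙ}, W_ℙ(X̃) ≥ W_ℙ(X) for all X ∈ Y^{x₀}_{W_ℙ}, and any maximizer coincides with X̃ ℙ-a.s.). Assume in addition that ∫₀¹ ([F_{X̃}^ℙ]^{-1}(u))² du < ∞. Then X̃ is ℙ-cost-efficient. -/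
open MeasureTheory Set Real

noncomputable section

/-- `X` is a `P`-cost-efficient payoff. -/
def CostEfficient {Ω : Type*} [MeasurableSpace Ω] (Q P : Measure Ω) (X : Ω → ℝ) : Prop :=
  IsPayoff Q X ∧ ∀ Y : Ω → ℝ, IsPayoff Q Y → P.map Y = P.map X →
    ∫ ω, X ω ∂Q ≤ ∫ ω, Y ω ∂Q

/-- if `ℓ^P` is continuously distributed under `P`, `1/ℓ^P` has finite
second moment under `P`, `W_P` is `P`-law invariant and `X̃` is a `P`-a.s. unique
maximizer of `W_P` over `Y^{x₀}_{W_P}` whose quantile function is square integrable, then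
`X̃` is `P`-cost-efficient. -/
theorem stmt15 {Ω : Type*} [MeasurableSpace Ω]
    (Q : Measure Ω) [IsProbabilityMeasure Q] (r T : ℝ) (hT : 0 < T)
    (Ps : Set (Measure Ω))
    (hPsprob : ∀ P' ∈ Ps, IsProbabilityMeasure P')
    (hPsequiv : ∀ P' ∈ Ps, P' ≪ Q ∧ Q ≪ P')
    (P : Measure Ω) (hP : P ∈ Ps)
    (hcont : Continuous (rvCdf P (lr P Q)))
    (hvar : Integrable (fun ω => (1 / lr P Q ω) ^ 2) P)
    (x₀ : ℝ) (hx₀ : 0 < x₀)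
    (W : (Ω → ℝ) → EReal)
    (hli : ∀ X Y : Ω → ℝ, IsPayoff Q X → IsPayoff Q Y → P.map X = P.map Y → W X = W Y)
    (Xt : Ω → ℝ)
    (hXt : Xt ∈ BudgetSet Q r T x₀ W)
    (hXtmax : ∀ X ∈ BudgetSet Q r T x₀ W, W X ≤ W Xt)
    (hXtuniq : ∀ X ∈ BudgetSet Q r T x₀ W,
      (∀ X' ∈ BudgetSet Q r T x₀ W, W X' ≤ W X) → X =ᵐ[P] Xt)
    (hsq : IntegrableOn (fun u => (quantile (rvCdf P Xt) u) ^ 2) (Ioo (0:ℝ) 1) volume) :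
    CostEfficient Q P Xt := by
  refine ⟨hXt.1, fun Y hY hlaw => ?_⟩
  by_contra h
  push_neg at h
  have hWYX : W Y = W Xt := hli Y Xt hY hXt.1 hlaw
  have hYb : Y ∈ BudgetSet Q r T x₀ W := by
    refine ⟨hY, by rw [hWYX]; exact hXt.2.1, by rw [hWYX]; exact hXt.2.2.1, ?_⟩
    calc Real.exp (-(r * T)) * ∫ ω, Y ω ∂Q
        ≤ Real.exp (-(r * T)) * ∫ ω, Xt ω ∂Q :=
          mul_le_mul_of_nonneg_left h.le (Real.exp_pos _).le
      _ ≤ x₀ := hXt.2.2.2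
  have hmax : ∀ X' ∈ BudgetSet Q r T x₀ W, W X' ≤ W Y := by
    intro X' hX'; rw [hWYX]; exact hXtmax X' hX'
  have heq : Y =ᵐ[P] Xt := hXtuniq Y hYb hmax
  have heqQ : Y =ᵐ[Q] Xt := (hPsequiv P hP).2.ae_eq heq
  have : ∫ ω, Y ω ∂Q = ∫ ω, Xt ω ∂Q := integral_congr_ae heqQ
  linarith
end
end

section
/- Let f and g be three times differentiable real functions, with g mapping its domain into the domain of f, such that f′ > 0, f″ ≤ 0, f‴ ≥ 0 and g′ > 0, g″ ≤ 0, g‴ ≥ 0 on their domains. Then the composition f ∘ g satisfies (f ∘ g)′ > 0, (f ∘ g)″ ≤ 0 and (f ∘ g)‴ ≥ 0; i.e., the class 𝔽_TSD of functions inducing third order stochastic dominance is composition-consistent. -/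
open Set

/-! By the chain rule,
`(f ∘ g)'' = f''(g) g'² + f'(g) g''` and `(f ∘ g)''' = f'''(g) g'³ + 3 f''(g) g' g'' + f'(g) g'''`.
Under the sign conditions every summand has the required sign; in the third derivative the
middle term is a product of the two nonpositive factors `f''(g) g'` and `g''`. -/

section CompositionDerivatives

variable {f g : ℝ → ℝ}

theorem hasDerivAt_deriv_comp_formula {x : ℝ} (hf₂ : DifferentiableAt ℝ (deriv f) (g x))
    (hg₁ : DifferentiableAt ℝ g x) (hg₂ : DifferentiableAt ℝ (deriv g) x) :
    HasDerivAt (fun y => deriv f (g y) * deriv g y)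
      (deriv (deriv f) (g x) * deriv g x ^ 2 + deriv f (g x) * deriv (deriv g) x) x :=
  ((hf₂.hasDerivAt.comp x hg₁.hasDerivAt).mul hg₂.hasDerivAt).congr_deriv
    (by simp only [Function.comp_apply]; ring)

theorem hasDerivAt_deriv_deriv_comp_formula {x : ℝ} (hf₂ : DifferentiableAt ℝ (deriv f) (g x))
    (hf₃ : DifferentiableAt ℝ (deriv (deriv f)) (g x)) (hg₁ : DifferentiableAt ℝ g x)
    (hg₂ : DifferentiableAt ℝ (deriv g) x) (hg₃ : DifferentiableAt ℝ (deriv (deriv g)) x) :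
    HasDerivAt
      (fun y => deriv (deriv f) (g y) * deriv g y ^ 2 + deriv f (g y) * deriv (deriv g) y)
      (deriv (deriv (deriv f)) (g x) * deriv g x ^ 3
        + 3 * deriv (deriv f) (g x) * deriv g x * deriv (deriv g) x
        + deriv f (g x) * deriv (deriv (deriv g)) x) x := by
  refine (((hf₃.hasDerivAt.comp x hg₁.hasDerivAt).mul (hg₂.hasDerivAt.pow 2)).add
    ((hf₂.hasDerivAt.comp x hg₁.hasDerivAt).mul hg₃.hasDerivAt)).congr_deriv ?_
  simp only [Function.comp_apply, Pi.pow_apply]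
  push_cast
  ring

variable {t : Set ℝ}

theorem eqOn_deriv_comp (hf₁ : ∀ y ∈ t, DifferentiableAt ℝ f (g y))
    (hg₁ : ∀ y ∈ t, DifferentiableAt ℝ g y) :
    EqOn (deriv (f ∘ g)) (fun y => deriv f (g y) * deriv g y) t :=
  fun y hy => deriv_comp y (hf₁ y hy) (hg₁ y hy)

theorem eqOn_deriv_deriv_comp (ht : IsOpen t) (hf₁ : ∀ y ∈ t, DifferentiableAt ℝ f (g y))
    (hf₂ : ∀ y ∈ t, DifferentiableAt ℝ (deriv f) (g y)) (hg₁ : ∀ y ∈ t, DifferentiableAt ℝ g y)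
    (hg₂ : ∀ y ∈ t, DifferentiableAt ℝ (deriv g) y) :
    EqOn (deriv (deriv (f ∘ g)))
      (fun y => deriv (deriv f) (g y) * deriv g y ^ 2 + deriv f (g y) * deriv (deriv g) y) t :=
  fun y hy => ((eqOn_deriv_comp hf₁ hg₁).eventuallyEq_of_mem (ht.mem_nhds hy)).deriv_eq.trans
    (hasDerivAt_deriv_comp_formula (hf₂ y hy) (hg₁ y hy) (hg₂ y hy)).deriv

theorem deriv_deriv_deriv_comp (ht : IsOpen t) (hf₁ : ∀ y ∈ t, DifferentiableAt ℝ f (g y))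
    (hf₂ : ∀ y ∈ t, DifferentiableAt ℝ (deriv f) (g y))
    (hf₃ : ∀ y ∈ t, DifferentiableAt ℝ (deriv (deriv f)) (g y))
    (hg₁ : ∀ y ∈ t, DifferentiableAt ℝ g y) (hg₂ : ∀ y ∈ t, DifferentiableAt ℝ (deriv g) y)
    (hg₃ : ∀ y ∈ t, DifferentiableAt ℝ (deriv (deriv g)) y) {x : ℝ} (hx : x ∈ t) :
    deriv (deriv (deriv (f ∘ g))) x =
      deriv (deriv (deriv f)) (g x) * deriv g x ^ 3
        + 3 * deriv (deriv f) (g x) * deriv g x * deriv (deriv g) x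
        + deriv f (g x) * deriv (deriv (deriv g)) x :=
  ((eqOn_deriv_deriv_comp ht hf₁ hf₂ hg₁ hg₂).eventuallyEq_of_mem
    (ht.mem_nhds hx)).deriv_eq.trans
    (hasDerivAt_deriv_deriv_comp_formula (hf₂ x hx) (hf₃ x hx) (hg₁ x hx) (hg₂ x hx)
      (hg₃ x hx)).deriv

end CompositionDerivatives

theorem stmt17_general (f g : ℝ → ℝ) (s t : Set ℝ) (ht : IsOpen t)
    (hmaps : ∀ x ∈ t, g x ∈ s)
    -- three times differentiability
    (hf1 : ∀ x ∈ s, DifferentiableAt ℝ f x)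
    (hf2 : ∀ x ∈ s, DifferentiableAt ℝ (deriv f) x)
    (hf3 : ∀ x ∈ s, DifferentiableAt ℝ (deriv (deriv f)) x)
    (hg1 : ∀ x ∈ t, DifferentiableAt ℝ g x)
    (hg2 : ∀ x ∈ t, DifferentiableAt ℝ (deriv g) x)
    (hg3 : ∀ x ∈ t, DifferentiableAt ℝ (deriv (deriv g)) x)
    -- sign conditions: f′ > 0, f″ ≤ 0, f‴ ≥ 0 on s, and likewise for g on t
    (hf1' : ∀ x ∈ s, 0 < deriv f x)
    (hf2' : ∀ x ∈ s, deriv (deriv f) x ≤ 0)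
    (hf3' : ∀ x ∈ s, 0 ≤ deriv (deriv (deriv f)) x)
    (hg1' : ∀ x ∈ t, 0 < deriv g x)
    (hg2' : ∀ x ∈ t, deriv (deriv g) x ≤ 0)
    (hg3' : ∀ x ∈ t, 0 ≤ deriv (deriv (deriv g)) x) :
    ∀ x ∈ t, 0 < deriv (f ∘ g) x ∧ deriv (deriv (f ∘ g)) x ≤ 0 ∧
      0 ≤ deriv (deriv (deriv (f ∘ g))) x := by
  have hf1t : ∀ y ∈ t, DifferentiableAt ℝ f (g y) := fun y hy => hf1 _ (hmaps y hy)
  have hf2t : ∀ y ∈ t, DifferentiableAt ℝ (deriv f) (g y) := fun y hy => hf2 _ (hmaps y hy)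
  have hf3t : ∀ y ∈ t, DifferentiableAt ℝ (deriv (deriv f)) (g y) :=
    fun y hy => hf3 _ (hmaps y hy)
  intro x hx
  have hgx := hmaps x hx
  rw [eqOn_deriv_comp hf1t hg1 hx, eqOn_deriv_deriv_comp ht hf1t hf2t hg1 hg2 hx,
    deriv_deriv_deriv_comp ht hf1t hf2t hf3t hg1 hg2 hg3 hx]
  have hf1x := hf1' _ hgx
  have hf2x := hf2' _ hgx
  have hf3x := hf3' _ hgx
  have hg1x := hg1' x hx
  have hg2x := hg2' x hx
  have hg3x := hg3' x hx
  refine ⟨mul_pos hf1x hg1x, ?_, ?_⟩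
  · exact add_nonpos (mul_nonpos_of_nonpos_of_nonneg hf2x (sq_nonneg _))
      (mul_nonpos_of_nonneg_of_nonpos hf1x.le hg2x)
  · have hmiddle : 3 * deriv (deriv f) (g x) * deriv g x ≤ 0 :=
      mul_nonpos_of_nonpos_of_nonneg (mul_nonpos_of_nonneg_of_nonpos zero_le_three hf2x) hg1x.le
    exact add_nonneg (add_nonneg (mul_nonneg hf3x (pow_nonneg hg1x.le 3))
      (mul_nonneg_of_nonpos_of_nonpos hmiddle hg2x)) (mul_nonneg hf1x.le hg3x)

/-- the defining properties of `𝔽_TSD` (positive first derivative,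
nonpositive second derivative, nonnegative third derivative) are preserved under
composition, i.e. `𝔽_TSD` is composition-consistent. -/
theorem stmt17 (f g : ℝ → ℝ) (s t : Set ℝ) (hs : IsOpen s) (ht : IsOpen t)
    (hmaps : ∀ x ∈ t, g x ∈ s)
    -- three times differentiability
    (hf1 : ∀ x ∈ s, DifferentiableAt ℝ f x)
    (hf2 : ∀ x ∈ s, DifferentiableAt ℝ (deriv f) x)
    (hf3 : ∀ x ∈ s, DifferentiableAt ℝ (deriv (deriv f)) x)
    (hg1 : ∀ x ∈ t, DifferentiableAt ℝ g x)
    (hg2 : ∀ x ∈ t, DifferentiableAt ℝ (deriv g) x)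
    (hg3 : ∀ x ∈ t, DifferentiableAt ℝ (deriv (deriv g)) x)
    -- sign conditions: f′ > 0, f″ ≤ 0, f‴ ≥ 0 on s, and likewise for g on t
    (hf1' : ∀ x ∈ s, 0 < deriv f x)
    (hf2' : ∀ x ∈ s, deriv (deriv f) x ≤ 0)
    (hf3' : ∀ x ∈ s, 0 ≤ deriv (deriv (deriv f)) x)
    (hg1' : ∀ x ∈ t, 0 < deriv g x)
    (hg2' : ∀ x ∈ t, deriv (deriv g) x ≤ 0)
    (hg3' : ∀ x ∈ t, 0 ≤ deriv (deriv (deriv g)) x) :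
    ∀ x ∈ t, 0 < deriv (f ∘ g) x ∧ deriv (deriv (f ∘ g)) x ≤ 0 ∧
      0 ≤ deriv (deriv (deriv (f ∘ g))) x :=
  stmt17_general f g s t ht hmaps hf1 hf2 hf3 hg1 hg2 hg3 hf1' hf2' hf3' hg1' hg2' hg3'
end
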